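/- arXiv:math/0009141 — 2 statements merged into one kernel-verified Lean document; each statement's English description precedes it below -/
import Mathlib

section
/- Let k be a field, A a k-algebra, and R ∈ A⊗A a unitary invertible solution of the pentagon equation. Then the subalgebra A_R of A generated by P = R_(l) and H = R_(r) is spanned over k by the products {b·a : b ∈ H, a ∈ P}; in particular A_R is finite-dimensional and dim_k(A_R) ≤ l(R)². -/
/-!
Write `P = R_(l)` and `H = R_(r)`. Expanding `R` in a basis of `A` on one tensor factor shows that
`R` has an expansion with all left legs in `P`, and one with all right legs in `H`. Now slice the
pentagon equation `R¹²R¹³R²³ = R²³R¹²` by functionals on two of its three legs. On legs 1 and 3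
the right side yields every product in `P·H`, while on the left side the middle leg is a right leg
of `R¹²` times a left leg of `R²³`; so `P·H ⊆ H·P`. Since `R` is invertible, the equation can be
rewritten as `R¹³R²³ = (R¹²)⁻¹R²³R¹²` and as `R¹²R¹³ = R²³R¹²(R²³)⁻¹`; slicing these on legs 1, 2
and on legs 2, 3 gives `H·H ⊆ H` and `P·P ⊆ P`. Hence `H·P` is closed under multiplication, and
it contains `P` and `H` because `1 ∈ P ∩ H`, so it is the subalgebra they generate. Its dimension
is at most `dim H · dim P ≤ l(R)²`.
-/

open TensorProduct

set_option maxHeartbeats 1000000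
set_option synthInstance.maxHeartbeats 200000

namespace PentagonPaper

section Pentagon

variable (k : Type*) [Field k] (A : Type*) [Ring A] [Algebra k A]

/-- `x ⊗ y ↦ x ⊗ y ⊗ 1` -/
noncomputable def leg12 : A ⊗[k] A →ₐ[k] A ⊗[k] (A ⊗[k] A) :=
  Algebra.TensorProduct.map (AlgHom.id k A) Algebra.TensorProduct.includeLeft

/-- `x ⊗ y ↦ x ⊗ 1 ⊗ y` -/
noncomputable def leg13 : A ⊗[k] A →ₐ[k] A ⊗[k] (A ⊗[k] A) :=
  Algebra.TensorProduct.map (AlgHom.id k A) Algebra.TensorProduct.includeRight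

/-- `x ⊗ y ↦ 1 ⊗ x ⊗ y` -/
noncomputable def leg23 : A ⊗[k] A →ₐ[k] A ⊗[k] (A ⊗[k] A) :=
  Algebra.TensorProduct.includeRight

variable {k A}

/-- The pentagon equation `R¹²R¹³R²³ = R²³R¹²`. -/
def IsPentagon (R : A ⊗[k] A) : Prop :=
  leg12 k A R * leg13 k A R * leg23 k A R = leg23 k A R * leg12 k A R

/-- `φ ↦ (id ⊗ φ)(R)`, i.e. the map sending a functional to the corresponding
left coefficient of `R`. -/
noncomputable def lCoefMap (R : A ⊗[k] A) : Module.Dual k A →ₗ[k] A :=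
  (TensorProduct.rid k A).toLinearMap ∘ₗ LinearMap.applyₗ R ∘ₗ LinearMap.lTensorHom A

/-- `φ ↦ (φ ⊗ id)(R)`, i.e. the map sending a functional to the corresponding
right coefficient of `R`. -/
noncomputable def rCoefMap (R : A ⊗[k] A) : Module.Dual k A →ₗ[k] A :=
  (TensorProduct.lid k A).toLinearMap ∘ₗ LinearMap.applyₗ R ∘ₗ LinearMap.rTensorHom A

/-- The space `R_(l)` of left coefficients of `R`. -/
noncomputable def lCoefs (R : A ⊗[k] A) : Submodule k A := LinearMap.range (lCoefMap R)

/-- The space `R_(r)` of right coefficients of `R`. -/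
noncomputable def rCoefs (R : A ⊗[k] A) : Submodule k A := LinearMap.range (rCoefMap R)

/-- `R` is unitary if `1 ∈ R_(l) ∩ R_(r)`. -/
def IsUnitary (R : A ⊗[k] A) : Prop := (1 : A) ∈ lCoefs R ∧ (1 : A) ∈ rCoefs R

/-- The length `l(R)`: the minimal `m` such that `R = ∑_{i=1}^m aᵢ ⊗ bᵢ`. -/
noncomputable def length (R : A ⊗[k] A) : ℕ :=
  sInf {m : ℕ | ∃ a b : Fin m → A, R = ∑ i, a i ⊗ₜ[k] b i}

/-- The left `R`-coinvariants `A^{R,l} = {a | R(a ⊗ 1) = a ⊗ 1}`. -/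
noncomputable def lCoinv (R : A ⊗[k] A) : Submodule k A where
  carrier := {a : A | R * (a ⊗ₜ[k] (1 : A)) = a ⊗ₜ[k] (1 : A)}
  add_mem' := by
    intro a b ha hb
    simp only [Set.mem_setOf_eq, TensorProduct.add_tmul, mul_add] at *
    rw [ha, hb]
  zero_mem' := by simp
  smul_mem' := by
    intro c a ha
    simp only [Set.mem_setOf_eq] at *
    rw [← TensorProduct.smul_tmul', mul_smul_comm, ha]

/-- The right `R`-coinvariants `A^{R,r} = {a | (1 ⊗ a)R = 1 ⊗ a}`. -/
noncomputable def rCoinv (R : A ⊗[k] A) : Submodule k A where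
  carrier := {a : A | ((1 : A) ⊗ₜ[k] a) * R = (1 : A) ⊗ₜ[k] a}
  add_mem' := by
    intro a b ha hb
    simp only [Set.mem_setOf_eq, TensorProduct.tmul_add, add_mul] at *
    rw [ha, hb]
  zero_mem' := by simp
  smul_mem' := by
    intro c a ha
    simp only [Set.mem_setOf_eq, TensorProduct.tmul_smul, smul_mul_assoc] at *
    rw [ha]

/-- The comultiplication `Δ_r : a ↦ R⁻¹(1 ⊗ a)R` on `A`. -/
noncomputable def deltaR (R : A ⊗[k] A) : A →ₗ[k] A ⊗[k] A where
  toFun a := Ring.inverse R * ((1 : A) ⊗ₜ[k] a) * R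
  map_add' a b := by simp [TensorProduct.tmul_add, mul_add, add_mul]
  map_smul' c a := by simp [TensorProduct.tmul_smul, mul_smul_comm, smul_mul_assoc]

/-- The comultiplication `Δ_l : a ↦ R(a ⊗ 1)R⁻¹` on `A`. -/
noncomputable def deltaL (R : A ⊗[k] A) : A →ₗ[k] A ⊗[k] A where
  toFun a := R * (a ⊗ₜ[k] (1 : A)) * Ring.inverse R
  map_add' a b := by simp [TensorProduct.add_tmul, mul_add, add_mul]
  map_smul' c a := by
    simp only [RingHom.id_apply]
    rw [← TensorProduct.smul_tmul', mul_smul_comm, smul_mul_assoc]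

end Pentagon

end PentagonPaper

namespace Submodule

variable {k : Type*} [CommSemiring k] {A : Type*} [Semiring A] [Algebra k A]

theorem span_setOf_mul_eq_mul (M N : Submodule k A) :
    span k {x : A | ∃ b ∈ M, ∃ a ∈ N, x = b * a} = M * N := by
  rw [mul_eq_span_mul_set]
  congr 1
  ext x
  simp only [Set.mem_ofPred_eq, Set.mem_mul, SetLike.mem_coe, eq_comm]

end Submodule

namespace Algebra

variable {k : Type*} [CommSemiring k] {A : Type*} [Semiring A] [Algebra k A]

theorem toSubmodule_adjoin_union_eq_mul {P H : Submodule k A} (hP : (1 : A) ∈ P)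
    (hH : (1 : A) ∈ H) (hPP : P * P ≤ P) (hHH : H * H ≤ H) (hPH : P * H ≤ H * P) :
    Subalgebra.toSubmodule (adjoin k ((P : Set A) ∪ H)) = H * P := by
  have hone : (1 : A) ∈ H * P := one_mul (1 : A) ▸ Submodule.mul_mem_mul hH hP
  have hmul : (H * P) * (H * P) ≤ H * P :=
    calc (H * P) * (H * P) = H * (P * H) * P := by simp only [mul_assoc]
      _ ≤ H * (H * P) * P := by gcongr
      _ = (H * H) * (P * P) := by simp only [mul_assoc]
      _ ≤ H * P := by gcongr
  let S := (H * P).toSubalgebra hone fun _ _ hx hy => hmul (Submodule.mul_mem_mul hx hy)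
  refine le_antisymm (fun x hx => adjoin_le (S := S) ?_ hx) ?_
  · rintro x (hx | hx)
    exacts [one_mul x ▸ Submodule.mul_mem_mul hH hx, mul_one x ▸ Submodule.mul_mem_mul hx hP]
  · rw [Submodule.mul_le]
    exact fun h hh p hp => (Subalgebra.mem_toSubmodule _).2 <|
      mul_mem (subset_adjoin (.inr hh)) (subset_adjoin (.inl hp))

end Algebra

namespace Submodule

variable {k : Type*} [Field k] {A : Type*} [Ring A] [Algebra k A]

instance finiteDimensional_mul (M N : Submodule k A) [FiniteDimensional k M]
    [FiniteDimensional k N] : FiniteDimensional k ↥(M * N) := by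
  rw [← mulMap_range]
  infer_instance

theorem finrank_mul_le (M N : Submodule k A) [FiniteDimensional k M] [FiniteDimensional k N] :
    Module.finrank k ↥(M * N) ≤ Module.finrank k M * Module.finrank k N := by
  rw [← mulMap_range, ← Module.finrank_tensorProduct]
  exact LinearMap.finrank_range_le _

end Submodule

namespace PentagonPaper

variable {k : Type*} [Field k] {A : Type*} [Ring A] [Algebra k A]

theorem lCoefMap_apply (R : A ⊗[k] A) (φ : Module.Dual k A) :
    lCoefMap R φ = TensorProduct.rid k A (LinearMap.lTensor A φ R) := rfl

theorem rCoefMap_apply (R : A ⊗[k] A) (φ : Module.Dual k A) :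
    rCoefMap R φ = TensorProduct.lid k A (LinearMap.rTensor A φ R) := rfl

theorem lCoefMap_basis_coord {ι : Type*} [DecidableEq ι] (b : Module.Basis ι k A)
    (R : A ⊗[k] A) (i : ι) :
    lCoefMap R (b.coord i) = TensorProduct.equivFinsuppOfBasisRight b R i := by
  induction R using TensorProduct.induction_on with
  | zero => simp [lCoefMap_apply]
  | tmul x y => simp [lCoefMap_apply]
  | add x y hx hy => simp_all [lCoefMap_apply]

theorem rCoefMap_basis_coord {ι : Type*} [DecidableEq ι] (b : Module.Basis ι k A)
    (R : A ⊗[k] A) (i : ι) :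
    rCoefMap R (b.coord i) = TensorProduct.equivFinsuppOfBasisLeft b R i := by
  induction R using TensorProduct.induction_on with
  | zero => simp [rCoefMap_apply]
  | tmul x y => simp [rCoefMap_apply]
  | add x y hx hy => simp_all [rCoefMap_apply]

theorem mem_range_rTensor_lCoefs (R : A ⊗[k] A) :
    R ∈ LinearMap.range (LinearMap.rTensor A (lCoefs R).subtype) := by
  classical
  let b := Module.Free.chooseBasis k A
  have hR := (TensorProduct.equivFinsuppOfBasisRight b).symm_apply_apply R
  rw [TensorProduct.equivFinsuppOfBasisRight_symm_apply] at hR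
  set c := TensorProduct.equivFinsuppOfBasisRight b R
  have hc (i) : c i ∈ lCoefs R := ⟨b.coord i, lCoefMap_basis_coord b R i⟩
  have hsum : (c.sum fun i m => m ⊗ₜ[k] b i) ∈
      LinearMap.range (LinearMap.rTensor A (lCoefs R).subtype) :=
    Submodule.sum_mem _ fun i _ => ⟨⟨c i, hc i⟩ ⊗ₜ b i, rfl⟩
  rwa [hR] at hsum

theorem mem_range_lTensor_rCoefs (R : A ⊗[k] A) :
    R ∈ LinearMap.range (LinearMap.lTensor A (rCoefs R).subtype) := by
  classical
  let b := Module.Free.chooseBasis k A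
  have hR := (TensorProduct.equivFinsuppOfBasisLeft b).symm_apply_apply R
  rw [TensorProduct.equivFinsuppOfBasisLeft_symm_apply] at hR
  set c := TensorProduct.equivFinsuppOfBasisLeft b R
  have hc (i) : c i ∈ rCoefs R := ⟨b.coord i, rCoefMap_basis_coord b R i⟩
  have hsum : (c.sum fun i m => b i ⊗ₜ[k] m) ∈
      LinearMap.range (LinearMap.lTensor A (rCoefs R).subtype) :=
    Submodule.sum_mem _ fun i _ => ⟨b i ⊗ₜ ⟨c i, hc i⟩, rfl⟩
  rwa [hR] at hsum

noncomputable def contract12 (φ ψ : Module.Dual k A) : A ⊗[k] (A ⊗[k] A) →ₗ[k] A :=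
  (TensorProduct.lid k A).toLinearMap ∘ₗ
    TensorProduct.map φ ((TensorProduct.lid k A).toLinearMap ∘ₗ LinearMap.rTensor A ψ)

noncomputable def contract23 (φ ψ : Module.Dual k A) : A ⊗[k] (A ⊗[k] A) →ₗ[k] A :=
  (TensorProduct.rid k A).toLinearMap ∘ₗ
    LinearMap.lTensor A ((TensorProduct.lid k k).toLinearMap ∘ₗ TensorProduct.map φ ψ)

noncomputable def contract13 (φ ψ : Module.Dual k A) : A ⊗[k] (A ⊗[k] A) →ₗ[k] A :=
  (TensorProduct.lid k A).toLinearMap ∘ₗ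
    TensorProduct.map φ ((TensorProduct.rid k A).toLinearMap ∘ₗ LinearMap.lTensor A ψ)

@[simp] theorem contract12_tmul (φ ψ : Module.Dual k A) (x y z : A) :
    contract12 φ ψ (x ⊗ₜ[k] (y ⊗ₜ[k] z)) = (φ x * ψ y) • z := by
  simp [contract12, mul_smul, smul_comm (φ x)]

@[simp] theorem contract23_tmul (φ ψ : Module.Dual k A) (x y z : A) :
    contract23 φ ψ (x ⊗ₜ[k] (y ⊗ₜ[k] z)) = (φ y * ψ z) • x := by
  simp [contract23, mul_smul]

@[simp] theorem contract13_tmul (φ ψ : Module.Dual k A) (x y z : A) :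
    contract13 φ ψ (x ⊗ₜ[k] (y ⊗ₜ[k] z)) = (φ x * ψ z) • y := by
  simp [contract13, mul_smul, smul_comm (φ x)]

@[simp] theorem leg12_tmul (x y : A) : leg12 k A (x ⊗ₜ[k] y) = x ⊗ₜ[k] (y ⊗ₜ[k] 1) := by
  simp [leg12]

@[simp] theorem leg13_tmul (x y : A) :
    leg13 k A (x ⊗ₜ[k] y) = x ⊗ₜ[k] ((1 : A) ⊗ₜ[k] y) := by
  simp [leg13]

@[simp] theorem leg23_tmul (x y : A) :
    leg23 k A (x ⊗ₜ[k] y) = (1 : A) ⊗ₜ[k] (x ⊗ₜ[k] y) := by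
  simp [leg23]

theorem contract12_leg13_mul_leg23 (φ ψ : Module.Dual k A) (s t : A ⊗[k] A) :
    contract12 φ ψ (leg13 k A s * leg23 k A t) = rCoefMap s φ * rCoefMap t ψ := by
  obtain ⟨S, rfl⟩ := TensorProduct.exists_finset s
  obtain ⟨T, rfl⟩ := TensorProduct.exists_finset t
  simp [rCoefMap_apply, Finset.sum_mul, Finset.mul_sum, Finset.smul_sum, mul_smul, smul_comm (φ _)]

theorem contract23_leg12_mul_leg13 (φ ψ : Module.Dual k A) (s t : A ⊗[k] A) :
    contract23 φ ψ (leg12 k A s * leg13 k A t) = lCoefMap s φ * lCoefMap t ψ := by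
  obtain ⟨S, rfl⟩ := TensorProduct.exists_finset s
  obtain ⟨T, rfl⟩ := TensorProduct.exists_finset t
  simp [lCoefMap_apply, Finset.sum_mul, Finset.mul_sum, Finset.smul_sum, mul_smul, smul_comm (φ _)]

theorem contract13_leg23_mul_leg12 (φ ψ : Module.Dual k A) (s t : A ⊗[k] A) :
    contract13 φ ψ (leg23 k A s * leg12 k A t) = lCoefMap s ψ * rCoefMap t φ := by
  obtain ⟨S, rfl⟩ := TensorProduct.exists_finset s
  obtain ⟨T, rfl⟩ := TensorProduct.exists_finset t
  simp [lCoefMap_apply, rCoefMap_apply, Finset.sum_mul, Finset.mul_sum, Finset.smul_sum, mul_smul,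
    smul_comm (φ _)]

theorem contract12_leg12_mul_leg23_mul_leg12_mem {H : Submodule k A} {t : A ⊗[k] A}
    (ht : t ∈ LinearMap.range (LinearMap.lTensor A H.subtype)) (φ ψ : Module.Dual k A)
    (X Y : A ⊗[k] A) : contract12 φ ψ (leg12 k A X * leg23 k A t * leg12 k A Y) ∈ H := by
  obtain ⟨t, rfl⟩ := ht
  obtain ⟨S, rfl⟩ := TensorProduct.exists_finset t
  obtain ⟨SX, rfl⟩ := TensorProduct.exists_finset X
  obtain ⟨SY, rfl⟩ := TensorProduct.exists_finset Y
  simp only [map_sum, LinearMap.lTensor_tmul, Submodule.subtype_apply, leg12_tmul, leg23_tmul,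
    Finset.sum_mul, Finset.mul_sum, Algebra.TensorProduct.tmul_mul_tmul, one_mul, mul_one,
    contract12_tmul]
  exact H.sum_mem fun _ _ => H.sum_mem fun _ _ => H.sum_mem fun _ _ => H.smul_mem _ (Subtype.prop _)

theorem contract23_leg23_mul_leg12_mul_leg23_mem {P : Submodule k A} {t : A ⊗[k] A}
    (ht : t ∈ LinearMap.range (LinearMap.rTensor A P.subtype)) (φ ψ : Module.Dual k A)
    (X Y : A ⊗[k] A) : contract23 φ ψ (leg23 k A X * leg12 k A t * leg23 k A Y) ∈ P := by
  obtain ⟨t, rfl⟩ := ht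
  obtain ⟨S, rfl⟩ := TensorProduct.exists_finset t
  obtain ⟨SX, rfl⟩ := TensorProduct.exists_finset X
  obtain ⟨SY, rfl⟩ := TensorProduct.exists_finset Y
  simp only [map_sum, LinearMap.rTensor_tmul, Submodule.subtype_apply, leg12_tmul, leg23_tmul,
    Finset.sum_mul, Finset.mul_sum, Algebra.TensorProduct.tmul_mul_tmul, one_mul, mul_one,
    contract23_tmul]
  exact P.sum_mem fun _ _ => P.sum_mem fun _ _ => P.sum_mem fun _ _ => P.smul_mem _ (Subtype.prop _)

theorem contract13_leg12_mul_leg13_mul_leg23_mem {H P : Submodule k A} {s t : A ⊗[k] A}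
    (hs : s ∈ LinearMap.range (LinearMap.lTensor A H.subtype))
    (ht : t ∈ LinearMap.range (LinearMap.rTensor A P.subtype)) (φ ψ : Module.Dual k A)
    (X : A ⊗[k] A) : contract13 φ ψ (leg12 k A s * leg13 k A X * leg23 k A t) ∈ H * P := by
  obtain ⟨s, rfl⟩ := hs
  obtain ⟨t, rfl⟩ := ht
  obtain ⟨S, rfl⟩ := TensorProduct.exists_finset s
  obtain ⟨T, rfl⟩ := TensorProduct.exists_finset t
  obtain ⟨SX, rfl⟩ := TensorProduct.exists_finset X
  simp only [map_sum, LinearMap.lTensor_tmul, LinearMap.rTensor_tmul, Submodule.subtype_apply,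
    leg12_tmul, leg13_tmul, leg23_tmul, Finset.sum_mul, Finset.mul_sum,
    Algebra.TensorProduct.tmul_mul_tmul, one_mul, mul_one, contract13_tmul]
  exact Submodule.sum_mem _ fun _ _ => Submodule.sum_mem _ fun _ _ => Submodule.sum_mem _ fun _ _ =>
    Submodule.smul_mem _ _ (Submodule.mul_mem_mul (Subtype.prop _) (Subtype.prop _))

theorem IsPentagon.leg13_mul_leg23 {R : A ⊗[k] A} (hpent : IsPentagon R) (hinv : IsUnit R) :
    leg13 k A R * leg23 k A R = leg12 k A (Ring.inverse R) * leg23 k A R * leg12 k A R := by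
  have h : leg12 k A (Ring.inverse R) * leg12 k A R = 1 := by
    rw [← map_mul, Ring.inverse_mul_cancel R hinv, map_one]
  calc leg13 k A R * leg23 k A R
      = leg12 k A (Ring.inverse R) * (leg12 k A R * leg13 k A R * leg23 k A R) := by
        rw [mul_assoc (leg12 k A R), ← mul_assoc, h, one_mul]
    _ = _ := by rw [hpent, mul_assoc]

theorem IsPentagon.leg12_mul_leg13 {R : A ⊗[k] A} (hpent : IsPentagon R) (hinv : IsUnit R) :
    leg12 k A R * leg13 k A R = leg23 k A R * leg12 k A R * leg23 k A (Ring.inverse R) := by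
  have h : leg23 k A R * leg23 k A (Ring.inverse R) = 1 := by
    rw [← map_mul, Ring.mul_inverse_cancel R hinv, map_one]
  rw [← hpent, mul_assoc _ (leg23 k A R), h, mul_one]

theorem rCoefs_mul_le {R : A ⊗[k] A} (hpent : IsPentagon R) (hinv : IsUnit R) :
    rCoefs R * rCoefs R ≤ rCoefs R := by
  rw [Submodule.mul_le]
  rintro _ ⟨φ, rfl⟩ _ ⟨ψ, rfl⟩
  rw [← contract12_leg13_mul_leg23, hpent.leg13_mul_leg23 hinv]
  exact contract12_leg12_mul_leg23_mul_leg12_mem (mem_range_lTensor_rCoefs R) φ ψ _ _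

theorem lCoefs_mul_le {R : A ⊗[k] A} (hpent : IsPentagon R) (hinv : IsUnit R) :
    lCoefs R * lCoefs R ≤ lCoefs R := by
  rw [Submodule.mul_le]
  rintro _ ⟨φ, rfl⟩ _ ⟨ψ, rfl⟩
  rw [← contract23_leg12_mul_leg13, hpent.leg12_mul_leg13 hinv]
  exact contract23_leg23_mul_leg12_mul_leg23_mem (mem_range_rTensor_lCoefs R) φ ψ _ _

theorem lCoefs_mul_rCoefs_le {R : A ⊗[k] A} (hpent : IsPentagon R) :
    lCoefs R * rCoefs R ≤ rCoefs R * lCoefs R := by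
  rw [Submodule.mul_le]
  rintro _ ⟨ψ, rfl⟩ _ ⟨φ, rfl⟩
  rw [← contract13_leg23_mul_leg12, ← hpent]
  exact contract13_leg12_mul_leg13_mul_leg23_mem (mem_range_lTensor_rCoefs R)
    (mem_range_rTensor_lCoefs R) φ ψ _

theorem lCoefs_le_span_range {ι : Type*} [Fintype ι] {R : A ⊗[k] A} {x y : ι → A}
    (hR : R = ∑ i, x i ⊗ₜ[k] y i) : lCoefs R ≤ Submodule.span k (Set.range x) := by
  rintro _ ⟨φ, rfl⟩
  simp only [hR, lCoefMap_apply, map_sum, LinearMap.lTensor_tmul, TensorProduct.rid_tmul]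
  exact Submodule.sum_mem _ fun i _ => Submodule.smul_mem _ _ (Submodule.subset_span ⟨i, rfl⟩)

theorem rCoefs_le_span_range {ι : Type*} [Fintype ι] {R : A ⊗[k] A} {x y : ι → A}
    (hR : R = ∑ i, x i ⊗ₜ[k] y i) : rCoefs R ≤ Submodule.span k (Set.range y) := by
  rintro _ ⟨φ, rfl⟩
  simp only [hR, rCoefMap_apply, map_sum, LinearMap.rTensor_tmul, TensorProduct.lid_tmul]
  exact Submodule.sum_mem _ fun i _ => Submodule.smul_mem _ _ (Submodule.subset_span ⟨i, rfl⟩)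

theorem exists_sum_tmul_eq_of_length (R : A ⊗[k] A) :
    ∃ x y : Fin (length R) → A, R = ∑ i, x i ⊗ₜ[k] y i :=
  Nat.sInf_mem (TensorProduct.exists_sum_tmul_eq R)

instance finiteDimensional_lCoefs (R : A ⊗[k] A) : FiniteDimensional k (lCoefs R) :=
  have ⟨x, _, hR⟩ := exists_sum_tmul_eq_of_length R
  have := FiniteDimensional.span_of_finite k (Set.finite_range x)
  Submodule.finiteDimensional_of_le (lCoefs_le_span_range hR)

instance finiteDimensional_rCoefs (R : A ⊗[k] A) : FiniteDimensional k (rCoefs R) :=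
  have ⟨_, y, hR⟩ := exists_sum_tmul_eq_of_length R
  have := FiniteDimensional.span_of_finite k (Set.finite_range y)
  Submodule.finiteDimensional_of_le (rCoefs_le_span_range hR)

theorem finrank_lCoefs_le_length (R : A ⊗[k] A) : Module.finrank k (lCoefs R) ≤ length R := by
  obtain ⟨x, _, hR⟩ := exists_sum_tmul_eq_of_length R
  have := FiniteDimensional.span_of_finite k (Set.finite_range x)
  calc Module.finrank k (lCoefs R) ≤ Module.finrank k (Submodule.span k (Set.range x)) :=
        Submodule.finrank_mono (lCoefs_le_span_range hR)
    _ ≤ length R := (finrank_range_le_card x).trans_eq (Fintype.card_fin _)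

theorem finrank_rCoefs_le_length (R : A ⊗[k] A) : Module.finrank k (rCoefs R) ≤ length R := by
  obtain ⟨_, y, hR⟩ := exists_sum_tmul_eq_of_length R
  have := FiniteDimensional.span_of_finite k (Set.finite_range y)
  calc Module.finrank k (rCoefs R) ≤ Module.finrank k (Submodule.span k (Set.range y)) :=
        Submodule.finrank_mono (rCoefs_le_span_range hR)
    _ ≤ length R := (finrank_range_le_card y).trans_eq (Fintype.card_fin _)

theorem finrank_rCoefs_mul_lCoefs_le (R : A ⊗[k] A) :
    Module.finrank k ↥(rCoefs R * lCoefs R) ≤ length R ^ 2 :=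
  calc Module.finrank k ↥(rCoefs R * lCoefs R)
      ≤ Module.finrank k (rCoefs R) * Module.finrank k (lCoefs R) := Submodule.finrank_mul_le _ _
    _ ≤ length R * length R :=
        Nat.mul_le_mul (finrank_rCoefs_le_length R) (finrank_lCoefs_le_length R)
    _ = length R ^ 2 := (sq _).symm

/-- **Statement 5.** For a unitary invertible solution `R` of the pentagon equation, the
subalgebra `A_R` of `A` generated by `P = R_(l)` and `H = R_(r)` is spanned by the products
`{b * a : b ∈ H, a ∈ P}`; in particular it is finite-dimensional of dimension at most
`l(R)²`. -/
theorem subalgebra_generated_by_coefficients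
    {k : Type u} [Field k] {A : Type v} [Ring A] [Algebra k A]
    (R : A ⊗[k] A) (hinv : IsUnit R) (hpent : IsPentagon R) (huni : IsUnitary R) :
    Subalgebra.toSubmodule
        (Algebra.adjoin k ((lCoefs R : Set A) ∪ (rCoefs R : Set A))) =
      Submodule.span k {x : A | ∃ b ∈ rCoefs R, ∃ a ∈ lCoefs R, x = b * a} ∧
    FiniteDimensional k
      ↥(Algebra.adjoin k ((lCoefs R : Set A) ∪ (rCoefs R : Set A))) ∧
    Module.finrank k
        ↥(Algebra.adjoin k ((lCoefs R : Set A) ∪ (rCoefs R : Set A))) ≤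
      length R ^ 2 := by
  have hadj := Algebra.toSubmodule_adjoin_union_eq_mul huni.1 huni.2
    (lCoefs_mul_le hpent hinv) (rCoefs_mul_le hpent hinv) (lCoefs_mul_rCoefs_le hpent)
  refine ⟨hadj.trans (Submodule.span_setOf_mul_eq_mul _ _).symm, ?_, ?_⟩
  · rw [← Subalgebra.finiteDimensional_toSubmodule, hadj]
    infer_instance
  · rw [← Subalgebra.finrank_toSubmodule, hadj]
    exact finrank_rCoefs_mul_lCoefs_le R

end PentagonPaper
end

section
/- Let k be a field and A a finite-dimensional k-algebra. Then every invertible solution R ∈ A⊗A of the pentagon equation is unitary, i.e. 1_A belongs to both coefficient spaces R_(l) and R_(r). -/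
open TensorProduct

set_option maxHeartbeats 1000000
set_option synthInstance.maxHeartbeats 200000

namespace PentagonPaper

/-! Rewriting the pentagon equation as `R¹²R¹³ = R²³R¹²(R²³)⁻¹` and slicing both sides with
`id ⊗ φ ⊗ ψ` shows that the left coefficients of `R` form a multiplicatively closed subspace `L`
(the right-hand side is a left coefficient of `R`); `R¹³R²³ = (R¹²)⁻¹R²³R¹²` does the same for the
right coefficients. Left multiplication by `R` maps the finite-dimensional space of tensors whose
left coefficients lie in `L` injectively, hence surjectively, to itself; the preimage of `R` is
`1 ⊗ 1`, so `1 ∈ L`. -/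

section Slice

variable {S M N : Type*} [CommSemiring S] [AddCommMonoid M] [Module S M]
  [AddCommMonoid N] [Module S N]

noncomputable def lSlice (φ : Module.Dual S N) : M ⊗[S] N →ₗ[S] M :=
  (TensorProduct.rid S M).toLinearMap ∘ₗ φ.lTensor M

noncomputable def rSlice (φ : Module.Dual S M) : M ⊗[S] N →ₗ[S] N :=
  (TensorProduct.lid S N).toLinearMap ∘ₗ φ.rTensor N

@[simp] lemma lSlice_tmul (φ : Module.Dual S N) (m : M) (n : N) :
    lSlice φ (m ⊗ₜ[S] n) = φ n • m := by
  simp [lSlice]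

@[simp] lemma rSlice_tmul (φ : Module.Dual S M) (m : M) (n : N) :
    rSlice φ (m ⊗ₜ[S] n) = φ m • n := by
  simp [rSlice]

end Slice

variable {k : Type*} [Field k] {A : Type*} [Ring A] [Algebra k A]

lemma lCoefMap_eq_lSlice (X : A ⊗[k] A) (φ : Module.Dual k A) : lCoefMap X φ = lSlice φ X := rfl

lemma rCoefMap_eq_rSlice (X : A ⊗[k] A) (φ : Module.Dual k A) : rCoefMap X φ = rSlice φ X := rfl

lemma lCoefMap_comm (X : A ⊗[k] A) (φ : Module.Dual k A) :
    lCoefMap (Algebra.TensorProduct.comm k A A X) φ = rCoefMap X φ := by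
  induction X using TensorProduct.induction_on with
  | zero => simp [lCoefMap_eq_lSlice, rCoefMap_eq_rSlice]
  | tmul x y => simp [lCoefMap_eq_lSlice, rCoefMap_eq_rSlice]
  | add X Y hX hY => simp only [map_add, lCoefMap_eq_lSlice, rCoefMap_eq_rSlice] at *; rw [hX, hY]

lemma lCoefs_comm (X : A ⊗[k] A) : lCoefs (Algebra.TensorProduct.comm k A A X) = rCoefs X := by
  simp only [lCoefs, rCoefs, LinearMap.range_eq_map]
  congr 1
  exact LinearMap.ext (lCoefMap_comm X)

lemma one_mem_lCoefs_one : (1 : A) ∈ lCoefs (1 : A ⊗[k] A) := by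
  by_contra h
  have hdual : ∀ φ : Module.Dual k A, φ 1 = 0 := fun φ ↦ by
    by_contra hφ
    refine h ⟨(φ 1)⁻¹ • φ, ?_⟩
    simp [lCoefMap_eq_lSlice, Algebra.TensorProduct.one_def, smul_smul, inv_mul_cancel₀ hφ]
  exact h ((Module.forall_dual_apply_eq_zero_iff k (1 : A)).mp hdual ▸ zero_mem _)

lemma sum_lCoefMap_coord_tmul {ι : Type*} [Fintype ι] (b : Module.Basis ι k A) (X : A ⊗[k] A) :
    ∑ i, lCoefMap X (b.coord i) ⊗ₜ[k] b i = X := by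
  induction X using TensorProduct.induction_on with
  | zero => simp [lCoefMap_eq_lSlice]
  | tmul x y =>
    simp_rw [lCoefMap_eq_lSlice, lSlice_tmul, TensorProduct.smul_tmul, ← TensorProduct.tmul_sum,
      Module.Basis.coord_apply, b.sum_repr]
  | add X Y hX hY =>
    simp only [lCoefMap_eq_lSlice, map_add, TensorProduct.add_tmul, Finset.sum_add_distrib] at *
    rw [hX, hY]

lemma lCoefs_mul_le_s9 [FiniteDimensional k A] (X Y : A ⊗[k] A) :
    lCoefs (X * Y) ≤ lCoefs X * lCoefs Y := by
  rintro _ ⟨φ, rfl⟩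
  let b := Module.finBasis k A
  have hXY : X * Y = ∑ i, ∑ j,
      (lCoefMap X (b.coord i) * lCoefMap Y (b.coord j)) ⊗ₜ[k] (b i * b j) := by
    conv_lhs => rw [← sum_lCoefMap_coord_tmul b X, ← sum_lCoefMap_coord_tmul b Y]
    simp only [Finset.sum_mul_sum, Algebra.TensorProduct.tmul_mul_tmul]
  rw [hXY, lCoefMap_eq_lSlice]
  simp only [map_sum, lSlice_tmul]
  refine Submodule.sum_mem _ fun i _ ↦ Submodule.sum_mem _ fun j _ ↦ Submodule.smul_mem _ _ ?_
  exact Submodule.mul_mem_mul ⟨_, rfl⟩ ⟨_, rfl⟩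

theorem one_mem_of_lCoefs_le [FiniteDimensional k A] {L : Submodule k A} (hL : L * L ≤ L)
    {R : A ⊗[k] A} (hR : IsUnit R) (hRL : lCoefs R ≤ L) : (1 : A) ∈ L := by
  let M : Submodule k (A ⊗[k] A) := ⨅ φ : Module.Dual k A, L.comap (lSlice φ)
  have mem_M {X : A ⊗[k] A} : X ∈ M ↔ lCoefs X ≤ L := by
    simp [M, Submodule.mem_iInf, lCoefs, LinearMap.range_le_iff_comap, lCoefMap_eq_lSlice,
      Submodule.eq_top_iff']
  have hRM : ∀ X ∈ M, R * X ∈ M := fun X hX ↦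
    mem_M.2 ((lCoefs_mul_le_s9 R X).trans ((mul_le_mul' hRL (mem_M.1 hX)).trans hL))
  let f : M →ₗ[k] M := (LinearMap.mulLeft k R).restrict hRM
  have hf : Function.Injective f := fun X Y hXY ↦
    Subtype.ext (hR.mul_left_cancel (congrArg Subtype.val hXY))
  obtain ⟨X, hX⟩ := LinearMap.injective_iff_surjective.mp hf ⟨R, mem_M.2 hRL⟩
  have hX1 : (X : A ⊗[k] A) = 1 := hR.mul_eq_left.mp (congrArg Subtype.val hX)
  exact mem_M.1 (hX1 ▸ X.2) one_mem_lCoefs_one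

theorem one_mem_of_rCoefs_le [FiniteDimensional k A] {L : Submodule k A} (hL : L * L ≤ L)
    {R : A ⊗[k] A} (hR : IsUnit R) (hRL : rCoefs R ≤ L) : (1 : A) ∈ L :=
  one_mem_of_lCoefs_le hL (hR.map (Algebra.TensorProduct.comm k A A)) (lCoefs_comm R ▸ hRL)

lemma lSlice_leg12_mul_leg13 (φ ψ : Module.Dual k A) (X Y : A ⊗[k] A) :
    lSlice (TensorProduct.dualDistrib k A A (φ ⊗ₜ ψ)) (leg12 k A X * leg13 k A Y) =
      lCoefMap X φ * lCoefMap Y ψ := by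
  simp only [lCoefMap_eq_lSlice]
  induction X using TensorProduct.induction_on with
  | zero => simp
  | add X₁ X₂ h₁ h₂ => simp only [map_add, add_mul, h₁, h₂]
  | tmul x y =>
    induction Y using TensorProduct.induction_on with
    | zero => simp
    | add Y₁ Y₂ h₁ h₂ => simp only [map_add, mul_add, h₁, h₂]
    | tmul z w => simp [leg12, leg13, smul_smul, mul_comm]

lemma lSlice_leg23_mul_leg12_mul_leg23_mem_lCoefs (Φ : Module.Dual k (A ⊗[k] A))
    (P X T : A ⊗[k] A) :
    lSlice Φ (leg23 k A P * leg12 k A X * leg23 k A T) ∈ lCoefs X := by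
  refine ⟨Φ ∘ₗ LinearMap.mulLeft k P ∘ₗ LinearMap.mulRight k T ∘ₗ (TensorProduct.mk k A A).flip 1,
    ?_⟩
  simp only [lCoefMap_eq_lSlice]
  induction X using TensorProduct.induction_on with
  | zero => simp
  | add X₁ X₂ h₁ h₂ => simp only [map_add, add_mul, mul_add, h₁, h₂]
  | tmul x y => simp [leg12, leg23, mul_assoc]

lemma rSlice_leg13_mul_leg23 (φ ψ : Module.Dual k A) (X Y : A ⊗[k] A) :
    rSlice φ ((rSlice ψ).lTensor A (leg13 k A X * leg23 k A Y)) =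
      rCoefMap X φ * rCoefMap Y ψ := by
  simp only [rCoefMap_eq_rSlice]
  induction X using TensorProduct.induction_on with
  | zero => simp
  | add X₁ X₂ h₁ h₂ => simp only [map_add, add_mul, h₁, h₂]
  | tmul x y =>
    induction Y using TensorProduct.induction_on with
    | zero => simp
    | add Y₁ Y₂ h₁ h₂ => simp only [map_add, mul_add, h₁, h₂]
    | tmul z w => simp [leg13, leg23]

lemma rSlice_leg12_mul_leg23_mul_leg12_mem_rCoefs (φ ψ : Module.Dual k A)
    (P X T : A ⊗[k] A) :
    rSlice φ ((rSlice ψ).lTensor A (leg12 k A P * leg23 k A X * leg12 k A T)) ∈ rCoefs X := by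
  refine ⟨TensorProduct.dualDistrib k A A (φ ⊗ₜ ψ) ∘ₗ LinearMap.mulLeft k P ∘ₗ
    LinearMap.mulRight k T ∘ₗ TensorProduct.mk k A A 1, ?_⟩
  simp only [rCoefMap_eq_rSlice]
  induction X using TensorProduct.induction_on with
  | zero => simp
  | add X₁ X₂ h₁ h₂ => simp only [map_add, add_mul, mul_add, h₁, h₂]
  | tmul x y =>
    simp only [rSlice_tmul, LinearMap.coe_comp, Function.comp_apply, LinearMap.mulLeft_apply,
      LinearMap.mulRight_apply, TensorProduct.mk_apply]
    induction P using TensorProduct.induction_on with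
    | zero => simp
    | add P₁ P₂ h₁ h₂ => simp only [map_add, add_mul, add_smul, h₁, h₂]
    | tmul p q =>
      induction T using TensorProduct.induction_on with
      | zero => simp
      | add T₁ T₂ h₁ h₂ => simp only [map_add, mul_add, add_smul, h₁, h₂]
      | tmul t s => simp [leg12, leg23, mul_assoc, smul_smul, mul_comm]

lemma lCoefs_mul_self_le {R : A ⊗[k] A} (hR : IsUnit R) (hpent : IsPentagon R) :
    lCoefs R * lCoefs R ≤ lCoefs R := by
  obtain ⟨u, rfl⟩ := hR
  have hpent' : leg12 k A u * leg13 k A u = leg23 k A u * leg12 k A u * leg23 k A ↑u⁻¹ := by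
    rw [← hpent, mul_assoc _ (leg23 k A u), ← map_mul, Units.mul_inv, map_one, mul_one]
  refine Submodule.mul_le.2 ?_
  rintro _ ⟨φ, rfl⟩ _ ⟨ψ, rfl⟩
  rw [← lSlice_leg12_mul_leg13, hpent']
  exact lSlice_leg23_mul_leg12_mul_leg23_mem_lCoefs _ _ _ _

lemma rCoefs_mul_self_le {R : A ⊗[k] A} (hR : IsUnit R) (hpent : IsPentagon R) :
    rCoefs R * rCoefs R ≤ rCoefs R := by
  obtain ⟨u, rfl⟩ := hR
  have hpent' : leg13 k A u * leg23 k A u = leg12 k A ↑u⁻¹ * leg23 k A u * leg12 k A u := by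
    rw [mul_assoc (leg12 k A _), ← hpent, ← mul_assoc, ← mul_assoc, ← map_mul, Units.inv_mul,
      map_one, one_mul]
  refine Submodule.mul_le.2 ?_
  rintro _ ⟨φ, rfl⟩ _ ⟨ψ, rfl⟩
  rw [← rSlice_leg13_mul_leg23, hpent']
  exact rSlice_leg12_mul_leg23_mul_leg12_mem_rCoefs _ _ _ _ _

/-- **Statement 13.** Over a finite-dimensional algebra, every invertible solution of the
pentagon equation is unitary: `1_A` belongs to both coefficient spaces `R_(l)` and `R_(r)`. -/
theorem isUnitary_of_finiteDimensional
    {k : Type u} [Field k] {A : Type v} [Ring A] [Algebra k A] [FiniteDimensional k A]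
    (R : A ⊗[k] A) (hinv : IsUnit R) (hpent : IsPentagon R) :
    (1 : A) ∈ lCoefs R ∧ (1 : A) ∈ rCoefs R :=
  ⟨one_mem_of_lCoefs_le (lCoefs_mul_self_le hinv hpent) hinv le_rfl,
    one_mem_of_rCoefs_le (rCoefs_mul_self_le hinv hpent) hinv le_rfl⟩

end PentagonPaper
end
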